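/- Suppose X ∈ ℝ^{d_in×n} has no two identical columns, no zero columns, and satisfies n > rank(X). Then there exists a nonzero vector w ∈ ℝ^n with Xw = 0 such that X·diag(w)·Xᵀ ≠ 0. -/

import Mathlib

open scoped BigOperators

namespace CoLA

noncomputable section

/-- Frobenius norm of a real matrix. -/
def frobNorm {m n : ℕ} (M : Matrix (Fin m) (Fin n) ℝ) : ℝ :=
  Real.sqrt (∑ i, ∑ j, (M i j) ^ 2)

/-- Entrywise application of `σ` to a matrix. -/
def entrywise (σ : ℝ → ℝ) {m n : ℕ} (M : Matrix (Fin m) (Fin n) ℝ) :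
    Matrix (Fin m) (Fin n) ℝ :=
  Matrix.of fun i j => σ (M i j)

/-- `E_σ(r)`. -/
def Esig (σ : ℝ → ℝ) {din dout n : ℕ} (X : Matrix (Fin din) (Fin n) ℝ)
    (Y : Matrix (Fin dout) (Fin n) ℝ) (r : ℕ) : ℝ :=
  ⨅ (A : Matrix (Fin r) (Fin din) ℝ), ⨅ (B : Matrix (Fin dout) (Fin r) ℝ),
    frobNorm (Y - B * entrywise σ (A * X))

/-- `E_id(r)`. -/
def Eid {din dout n : ℕ} (X : Matrix (Fin din) (Fin n) ℝ)
    (Y : Matrix (Fin dout) (Fin n) ℝ) (r : ℕ) : ℝ :=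
  ⨅ (A : Matrix (Fin r) (Fin din) ℝ), ⨅ (B : Matrix (Fin dout) (Fin r) ℝ),
    frobNorm (Y - B * A * X)

/-- The (unsorted) singular values of `M`: square roots of eigenvalues of `Mᴴ * M`. -/
def svAux {m n : ℕ} (M : Matrix (Fin m) (Fin n) ℝ) : Fin n → ℝ :=
  fun i => Real.sqrt (((Matrix.isHermitian_conjTranspose_mul_self M : (M.transpose * M).IsHermitian)).eigenvalues i)

/-- Singular values of `M` sorted in non-increasing order (0-indexed). -/
def sv {m n : ℕ} (M : Matrix (Fin m) (Fin n) ℝ) : Fin n → ℝ :=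
  fun i => svAux M (Tuple.sort (fun j => -(svAux M j)) i)

/-- `k`-th largest singular value (1-indexed, `0` for `k > n`). -/
def sVal {m n : ℕ} (M : Matrix (Fin m) (Fin n) ℝ) (k : ℕ) : ℝ :=
  if h : k - 1 < n then sv M ⟨k - 1, h⟩ else 0

/-- `s_{>k}(M) = √(∑_{j>k} s_j(M)²)` (with `j` 1-indexed). -/
def sGt {m n : ℕ} (M : Matrix (Fin m) (Fin n) ℝ) (k : ℕ) : ℝ :=
  Real.sqrt (∑ j : Fin n, if k ≤ (j : ℕ) then (sv M j) ^ 2 else 0)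

/-- Spectral (ℓ²-operator) norm of a real matrix. -/
def specNorm {m n : ℕ} (M : Matrix (Fin m) (Fin n) ℝ) : ℝ :=
  ‖LinearMap.toContinuousLinearMap (Matrix.toEuclideanLin M)‖

/-- Effective rank `r_α(M)`: the least `k` with `∑_{i≤k} s_i² ≥ α ∑_i s_i²`. -/
def effRank {m n : ℕ} (M : Matrix (Fin m) (Fin n) ℝ) (α : ℝ) : ℕ :=
  sInf {k : ℕ |
    α * ∑ i : Fin n, (sv M i) ^ 2 ≤ ∑ i : Fin n, if (i : ℕ) < k then (sv M i) ^ 2 else 0}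

/-- Row space of `X` inside `Fin n → ℝ`. -/
def rowSpace {d n : ℕ} (X : Matrix (Fin d) (Fin n) ℝ) : Submodule ℝ (Fin n → ℝ) :=
  Submodule.span ℝ (Set.range X)

/-- Row space of `X` as a submodule of Euclidean space. -/
def rowSpaceE {d n : ℕ} (X : Matrix (Fin d) (Fin n) ℝ) :
    Submodule ℝ (EuclideanSpace ℝ (Fin n)) :=
  Submodule.span ℝ (Set.range fun i => (WithLp.equiv 2 (Fin n → ℝ)).symm (X i))

/-- Row-wise orthogonal projection of the rows of `Y` onto the subspace `S`. -/
def projRows {dout n : ℕ} (S : Submodule ℝ (EuclideanSpace ℝ (Fin n)))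
    (Y : Matrix (Fin dout) (Fin n) ℝ) : Matrix (Fin dout) (Fin n) ℝ :=
  Matrix.of fun i => WithLp.equiv 2 (Fin n → ℝ)
    ((S.orthogonalProjectionOnto ((WithLp.equiv 2 (Fin n → ℝ)).symm (Y i)) :
      EuclideanSpace ℝ (Fin n)))

/-- Row-wise orthogonal projection onto the orthogonal complement of `span{v}`. -/
def projVperp {dout n : ℕ} (v : Fin n → ℝ) (Y : Matrix (Fin dout) (Fin n) ℝ) :
    Matrix (Fin dout) (Fin n) ℝ :=
  projRows (Submodule.span ℝ {(WithLp.equiv 2 (Fin n → ℝ)).symm v})ᗮ Y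

end

end CoLA

/-!
Suppose `X diag(w) Xᵀ = 0` for every `w ∈ ker X`. Entry `(a, b)` of that matrix is the dot product
of `w` with the pointwise product of rows `a` and `b`, so this product is orthogonal to `ker X`,
i.e. lies in the row space. The row space is thus a subspace of `Kⁿ` closed under pointwise
multiplication; as the columns of `X` are distinct and nonzero, it separates coordinates and
vanishes at none. Multiplying elements that are `1` at `j` and `0` at each `k ≠ j` then produces
every standard basis vector, so `rank X = n`.
-/

namespace Matrix

variable {K l m n : Type*}

theorem mul_diagonal_mul_transpose_apply [CommSemiring K] [Fintype n] [DecidableEq n]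
    (A : Matrix l n K) (B : Matrix m n K) (w : n → K) (a : l) (b : m) :
    (A * diagonal w * Bᵀ) a b = (A a * B b) ⬝ᵥ w := by
  rw [mul_apply]
  simp only [mul_diagonal, transpose_apply, dotProduct, Pi.mul_apply]
  exact Finset.sum_congr rfl fun _ _ => by ring

theorem mem_span_range_of_forall_mulVec_eq_zero [Field K] [Fintype n] (X : Matrix m n K)
    {v : n → K} (h : ∀ w, X *ᵥ w = 0 → v ⬝ᵥ w = 0) : v ∈ Submodule.span K (Set.range X) := by
  classical
  by_contra hv
  obtain ⟨f, hfv, hf⟩ := Submodule.exists_dual_map_eq_bot_of_notMem hv inferInstance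
  set w : n → K := fun j => f (Pi.single j 1)
  have hfw (u : n → K) : f u = u ⬝ᵥ w := by
    conv_lhs => rw [← Finset.univ_sum_single u]
    simp only [map_sum, dotProduct]
    refine Finset.sum_congr rfl fun j _ => ?_
    rw [← smul_eq_mul, ← map_smul, ← Pi.single_smul', smul_eq_mul, mul_one]
  refine hfv ((hfw v).trans (h w ?_))
  funext i
  rw [mulVec, ← hfw, Pi.zero_apply]
  have hfX : f (X i) ∈ (Submodule.span K (Set.range X)).map f :=
    Submodule.mem_map_of_mem (Submodule.subset_span (Set.mem_range_self i))
  rwa [hf, Submodule.mem_bot] at hfX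

theorem span_range_mul_le_of_mul_diagonal_mul_transpose_eq_zero [Field K] [Fintype n]
    [DecidableEq n] (X : Matrix m n K) (h : ∀ w, X *ᵥ w = 0 → X * diagonal w * Xᵀ = 0) :
    Submodule.span K (Set.range X) * Submodule.span K (Set.range X) ≤
      Submodule.span K (Set.range X) := by
  rw [Submodule.span_mul_span, Submodule.span_le]
  rintro _ ⟨_, ⟨a, rfl⟩, _, ⟨b, rfl⟩, rfl⟩
  refine X.mem_span_range_of_forall_mulVec_eq_zero fun w hw => ?_
  rw [← X.mul_diagonal_mul_transpose_apply, h w hw, zero_apply]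

end Matrix

namespace Submodule

variable {K ι : Type*} [Field K] {R : Submodule K (ι → K)}

theorem exists_mem_apply_eq_one_apply_eq_zero (hmul : R * R ≤ R) {j k : ι}
    (hsep : ∃ v ∈ R, v j ≠ v k) (hnz : ∃ u ∈ R, u j ≠ 0) :
    ∃ h ∈ R, h j = 1 ∧ h k = 0 := by
  obtain ⟨v, hv, hvjk⟩ := hsep
  obtain ⟨u, hu, huj⟩ := hnz
  have hc : u j * (v j - v k) ≠ 0 := mul_ne_zero huj (sub_ne_zero.2 hvjk)
  refine ⟨(u j * (v j - v k))⁻¹ • (u * v - v k • u),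
    R.smul_mem _ (R.sub_mem (hmul (mul_mem_mul hu hv)) (R.smul_mem _ hu)), ?_, ?_⟩
  · simp only [Pi.smul_apply, Pi.sub_apply, Pi.mul_apply, smul_eq_mul]
    field_simp
  · simp only [Pi.smul_apply, Pi.sub_apply, Pi.mul_apply, smul_eq_mul]
    ring

theorem single_one_mem [Fintype ι] [DecidableEq ι] (hmul : R * R ≤ R) {j : ι}
    (hsep : ∀ k, j ≠ k → ∃ v ∈ R, v j ≠ v k) (hnz : ∃ u ∈ R, u j ≠ 0) :
    Pi.single j 1 ∈ R := by
  suffices ∀ s : Finset ι, ∃ f ∈ R, f j = 1 ∧ ∀ k ∈ s, k ≠ j → f k = 0 by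
    obtain ⟨f, hf, hfj, hf0⟩ := this Finset.univ
    convert hf
    funext k
    rcases eq_or_ne k j with rfl | hk
    · simp [hfj]
    · simp [hk, hf0 k (Finset.mem_univ k) hk]
  intro s
  induction s using Finset.induction_on with
  | empty =>
    obtain ⟨u, hu, huj⟩ := hnz
    exact ⟨(u j)⁻¹ • u, R.smul_mem _ hu, by simp [huj], by simp⟩
  | insert k s _ ih =>
    obtain ⟨f, hf, hfj, hf0⟩ := ih
    rcases eq_or_ne k j with rfl | hk
    · exact ⟨f, hf, hfj, fun l hl hlk => hf0 l ((Finset.mem_insert.1 hl).resolve_left hlk) hlk⟩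
    obtain ⟨h, hh, hhj, hhk⟩ := exists_mem_apply_eq_one_apply_eq_zero hmul (hsep k hk.symm) hnz
    refine ⟨f * h, hmul (mul_mem_mul hf hh), by simp [hfj, hhj], fun l hl hlj => ?_⟩
    rcases Finset.mem_insert.1 hl with rfl | hl
    · simp [hhk]
    · simp [hf0 l hl hlj]

theorem eq_top_of_mul_le_self [Fintype ι] (hmul : R * R ≤ R)
    (hsep : ∀ j k, j ≠ k → ∃ v ∈ R, v j ≠ v k) (hnz : ∀ j, ∃ v ∈ R, v j ≠ 0) : R = ⊤ := by
  classical
  rw [eq_top_iff, ← (Pi.basisFun K ι).span_eq, span_le]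
  rintro _ ⟨j, rfl⟩
  simpa using single_one_mem hmul (hsep j) (hnz j)

end Submodule

namespace CoLA

/-- Lemma 1: if `X` has no two identical columns, no zero columns
and `rank X < n`, then there is a nonzero `w ∈ ker(X)` with `X diag(w) Xᵀ ≠ 0`. -/
theorem stmt5 {din n : ℕ} (X : Matrix (Fin din) (Fin n) ℝ)
    (hcols : ∀ j k : Fin n, j ≠ k → (fun i => X i j) ≠ (fun i => X i k))
    (hnz : ∀ j : Fin n, (fun i => X i j) ≠ 0)
    (hrank : X.rank < n) :
    ∃ w : Fin n → ℝ, w ≠ 0 ∧ X.mulVec w = 0 ∧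
      X * Matrix.diagonal w * X.transpose ≠ 0 := by
  by_contra! hcon
  have hker (w : Fin n → ℝ) (hw : X.mulVec w = 0) :
      X * Matrix.diagonal w * X.transpose = 0 := by
    rcases eq_or_ne w 0 with rfl | hw0
    · simp
    · exact hcon w hw0 hw
  set R := Submodule.span ℝ (Set.range X)
  have hrow (i : Fin din) : X i ∈ R := Submodule.subset_span ⟨i, rfl⟩
  have htop : R = ⊤ :=
    Submodule.eq_top_of_mul_le_self (X.span_range_mul_le_of_mul_diagonal_mul_transpose_eq_zero hker)
      (fun j k hjk => let ⟨i, hi⟩ := Function.ne_iff.1 (hcols j k hjk); ⟨X i, hrow i, hi⟩)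
      (fun j => let ⟨i, hi⟩ := Function.ne_iff.1 (hnz j); ⟨X i, hrow i, hi⟩)
  have hfull : X.rank = n := by
    rw [show X.rank = Module.finrank ℝ R from X.rank_eq_finrank_span_row, htop, finrank_top,
      Module.finrank_fin_fun]
  omega

end CoLA
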